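/- arXiv:1708.06014 — 4 statements merged into one kernel-verified Lean document; each statement's English description precedes it below -/
import Mathlib

section
/- Let p be an odd prime. Then p is a Wieferich prime (i.e. 2^(p-1) ≡ 1 mod p²) if and only if 2^p − 1 is a p-th power modulo p², i.e. there exists an integer x with x^p ≡ 2^p − 1 (mod p²). -/
theorem wieferich_iff_pth_power (p : ℕ) (hp : p.Prime) (hodd : Odd p) :
    (2 : ZMod (p ^ 2)) ^ (p - 1) = 1 ↔
      ∃ x : ℤ, (x : ZMod (p ^ 2)) ^ p = 2 ^ p - 1 := by
  haveI : Fact p.Prime := ⟨hp⟩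
  have hpp : p = (p - 1) + 1 := (Nat.succ_pred_eq_of_pos hp.pos).symm
  haveI : NeZero (p ^ 2) := ⟨pow_ne_zero _ hp.ne_zero⟩
  have h2u : IsUnit (2 : ZMod (p ^ 2)) := by
    have : ((2 : ℕ) : ZMod (p ^ 2)) = 2 := by norm_num
    rw [← this, ZMod.isUnit_iff_coprime]
    exact Nat.Coprime.pow_right _ (Nat.coprime_two_left.mpr hodd)
  constructor
  · intro h
    refine ⟨1, ?_⟩
    have h2 : (2 : ZMod (p ^ 2)) ^ p = 2 := by
      have e : (2 : ZMod (p ^ 2)) ^ p = 2 ^ (p - 1) * 2 := by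
        rw [← pow_succ]; exact congrArg _ hpp
      rw [e, h, one_mul]
    simp only [Int.cast_one, one_pow, h2]
    norm_num
  · rintro ⟨x, hx⟩
    have hdvd : ((p : ℤ) ^ 2) ∣ x ^ p - (2 ^ p - 1) := by
      have : (((x ^ p - (2 ^ p - 1) : ℤ)) : ZMod (p ^ 2)) = 0 := by
        push_cast
        rw [hx]; ring
      have := (ZMod.intCast_zmod_eq_zero_iff_dvd _ _).mp this
      exact_mod_cast this
    -- x ≡ 1 mod p
    have hx1 : (p : ℤ) ∣ x - 1 := by
      have hp1 : (p : ℤ) ∣ x ^ p - (2 ^ p - 1) :=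
        dvd_trans (by rw [sq]; exact Dvd.intro _ rfl) hdvd
      have : ((x - 1 : ℤ) : ZMod p) = 0 := by
        have h0 : (((x ^ p - (2 ^ p - 1) : ℤ)) : ZMod p) = 0 :=
          (ZMod.intCast_zmod_eq_zero_iff_dvd _ _).mpr hp1
        push_cast at h0
        rw [ZMod.pow_card, ZMod.pow_card] at h0
        push_cast
        linear_combination h0
      exact (ZMod.intCast_zmod_eq_zero_iff_dvd _ _).mp this
    have hxp : ((p : ℤ) ^ 2) ∣ x ^ p - 1 := by
      have := dvd_sub_pow_of_dvd_sub (p := p) (a := x) (b := 1) (by exact_mod_cast hx1) 1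
      simpa using this
    have h2p : ((p : ℤ) ^ 2) ∣ 2 ^ p - 2 := by
      have := dvd_sub (hxp) hdvd
      have h : x ^ p - 1 - (x ^ p - (2 ^ p - 1)) = 2 ^ p - 2 := by ring
      rwa [h] at this
    have h2z : (2 : ZMod (p ^ 2)) ^ p = 2 := by
      have : (((2 ^ p - 2 : ℤ)) : ZMod (p ^ 2)) = 0 :=
        (ZMod.intCast_zmod_eq_zero_iff_dvd _ _).mpr (by exact_mod_cast h2p)
      push_cast at this
      linear_combination this
    have : (2 : ZMod (p ^ 2)) ^ (p - 1) * 2 = 1 * 2 := by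
      rw [one_mul, ← pow_succ, ← hpp, h2z]
    exact h2u.mul_right_cancel this
end

section
/- Let p be an odd prime, ζ a primitive p-th root of unity, and 𝔭 = (1 − ζ) ⊂ ℤ[ζ]. If x ∈ ℤ[ζ] satisfies x ≡ 1 (mod 𝔭), then N_{ℚ(ζ)/ℚ}((x − 1)^p + 2 − ζ) ≡ 2^p − 1 (mod p²) as integers. -/
/-!
Put `π = ζ - 1`. Every Galois conjugate of `π` is associated to `π`, and `π ∣ x - 1`, so each
conjugate of `(x - 1) ^ p + 2 - ζ` agrees with the corresponding conjugate of `2 - ζ` modulo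
`π ^ p`. Taking products, the two norms are congruent modulo `π ^ p`, and
`N(2 - ζ) = Φ_p(2) = 2 ^ p - 1`. Finally `π ^ (p - 1)` is associated to `p`, so an integer
divisible by `π ^ p` is divisible by `p * π`, hence by `p ^ 2` because `π ∣ m ↔ p ∣ m`
for integers `m`.
-/

open NumberField Polynomial

theorem Finset.dvd_prod_sub_prod {ι R : Type*} [CommRing R] (s : Finset ι) {f g : ι → R} {c : R}
    (h : ∀ i ∈ s, c ∣ f i - g i) : c ∣ ∏ i ∈ s, f i - ∏ i ∈ s, g i := by
  simp_rw [← Ideal.mem_span_singleton, ← Ideal.Quotient.eq] at h ⊢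
  rw [map_prod, map_prod]
  exact prod_congr rfl h

theorem Polynomial.eval_two_cyclotomic_prime {R : Type*} [CommRing R] (p : ℕ) [Fact p.Prime] :
    (cyclotomic p R).eval 2 = 2 ^ p - 1 := by
  simpa [show (2 : R) - 1 = 1 by norm_num] using
    congrArg (eval 2) (cyclotomic_prime_mul_X_sub_one R p)

theorem IsPrimitiveRoot.norm_algebraMap_sub_eq_eval_cyclotomic {n : ℕ} [NeZero n] {K L : Type*}
    [Field K] [Field L] [Algebra K L] [IsCyclotomicExtension {n} K L] {ζ : L}
    (hζ : IsPrimitiveRoot ζ n) (hirr : Irreducible (cyclotomic n K)) (a : K) :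
    Algebra.norm K (algebraMap K L a - ζ) = (cyclotomic n K).eval a := by
  have := IsCyclotomicExtension.neZero' n K L
  have := IsCyclotomicExtension.finiteDimensional {n} K L
  have := IsCyclotomicExtension.isGalois {n} K L
  let E := AlgebraicClosure L
  obtain ⟨z, hz⟩ := IsAlgClosed.exists_root _ (degree_cyclotomic_pos n E (NeZero.pos _)).ne.symm
  have : NeZero (n : E) := NeZero.of_faithfulSMul K _ n
  apply (algebraMap K E).injective
  rw [Algebra.norm_eq_prod_embeddings, ← eval₂_at_apply, ← eval_map, map_cyclotomic,
    cyclotomic_eq_prod_X_sub_primitiveRoots (isRoot_cyclotomic_iff.1 hz), eval_prod,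
    ← @Finset.prod_attach E E, ← Finset.univ_eq_attach]
  exact Fintype.prod_equiv (hζ.embeddingsEquivPrimitiveRoots E hirr) _ _ fun σ => by simp

namespace IsPrimitiveRoot

variable {p : ℕ} [hp : Fact p.Prime] {K : Type*} [Field K] [NumberField K]
  [IsCyclotomicExtension {p} ℚ K] {ζ : 𝓞 K}

theorem norm_two_sub (hζ : IsPrimitiveRoot ζ p) : Algebra.norm ℤ (2 - ζ) = 2 ^ p - 1 := by
  have hζK := hζ.map_of_injective RingOfIntegers.coe_injective
  apply Int.cast_injective (α := ℚ)
  rw [Algebra.coe_norm_int]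
  push_cast
  rw [← eval_two_cyclotomic_prime, ← hζK.norm_algebraMap_sub_eq_eval_cyclotomic
    (cyclotomic.irreducible_rat hp.out.pos), map_ofNat]
  rfl

theorem sq_dvd_of_sub_one_pow_dvd_intCast (hζ : IsPrimitiveRoot ζ p) {n : ℤ}
    (h : (ζ - 1) ^ p ∣ (n : 𝓞 K)) : (p : ℤ) ^ 2 ∣ n := by
  have hζK := hζ.map_of_injective RingOfIntegers.coe_injective
  have hdvd_iff (m : ℤ) : ζ - 1 ∣ (m : 𝓞 K) ↔ (p : ℤ) ∣ m :=
    IsCyclotomicExtension.Rat.zeta_sub_one_dvd_intCast_iff' p hζK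
  have hassoc : Associated ((ζ - 1) ^ p) ((p : 𝓞 K) * (ζ - 1)) := by
    rw [← pow_sub_one_mul hp.out.ne_zero]
    exact (IsCyclotomicExtension.Rat.associated_zeta_sub_one_pow_prime p hζK).mul_right _
  obtain ⟨m, rfl⟩ := (hdvd_iff n).1 ((dvd_pow_self _ hp.out.ne_zero).trans h)
  have hm : ζ - 1 ∣ (m : 𝓞 K) := by
    rw [Int.cast_mul, Int.cast_natCast] at h
    exact (mul_dvd_mul_iff_left (NeZero.ne (p : 𝓞 K))).1 (hassoc.dvd_iff_dvd_left.1 h)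
  rw [sq]
  exact mul_dvd_mul_left _ ((hdvd_iff m).1 hm)

end IsPrimitiveRoot

theorem NumberField.RingOfIntegers.algebraMap_norm_eq_prod_galRestrict {K : Type*} [Field K]
    [NumberField K] [IsGalois ℚ K] (x : 𝓞 K) :
    algebraMap ℤ (𝓞 K) (Algebra.norm ℤ x) = ∏ σ : Gal(K/ℚ), galRestrict ℤ ℚ K (𝓞 K) σ x := by
  apply RingOfIntegers.coe_injective
  rw [map_prod]
  simp only [algebraMap_galRestrict_apply]
  rw [← Algebra.norm_eq_prod_automorphisms, ← Algebra.coe_norm_int]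
  simp

theorem norm_phi_congr_general (p : ℕ+) (hp : Fact (p : ℕ).Prime)
    (K : Type*) [Field K] [Algebra ℚ K] [IsCyclotomicExtension {(p : ℕ)} ℚ K]
    (ζ : 𝓞 K) (hζ : IsPrimitiveRoot ζ (p : ℕ))
    (x : 𝓞 K) (hx : x - 1 ∈ Ideal.span {1 - ζ}) :
    (Algebra.norm ℤ ((x - 1) ^ (p : ℕ) + 2 - ζ)) ≡ 2 ^ (p : ℕ) - 1 [ZMOD ((p : ℤ) ^ 2)] := by
  have : CharZero K := charZero_of_injective_algebraMap (algebraMap ℚ K).injective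
  -- `NumberField K` carries the canonical `ℚ`-algebra structure; any other one equals it.
  obtain rfl : ‹Algebra ℚ K› = DivisionRing.toRatAlgebra := Subsingleton.elim _ _
  have : NumberField K := IsCyclotomicExtension.numberField {(p : ℕ)} ℚ K
  have : IsGalois ℚ K := IsCyclotomicExtension.isGalois {(p : ℕ)} ℚ K
  set φ := (x - 1) ^ (p : ℕ) + 2 - ζ with hφ
  have hπx : ζ - 1 ∣ x - 1 := by rwa [Ideal.mem_span_singleton, ← neg_sub, neg_dvd] at hx
  have hconj (σ : Gal(K/ℚ)) :
      (ζ - 1) ^ (p : ℕ) ∣ galRestrict ℤ ℚ K (𝓞 K) σ φ - galRestrict ℤ ℚ K (𝓞 K) σ (2 - ζ) := by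
    rw [← map_sub, show φ - (2 - ζ) = (x - 1) ^ (p : ℕ) by rw [hφ]; ring, map_pow]
    exact pow_dvd_pow_of_dvd ((hζ.associated_sub_one_map_sub_one _).dvd.trans (map_dvd _ hπx)) _
  have hdiff : (p : ℤ) ^ 2 ∣ Algebra.norm ℤ φ - Algebra.norm ℤ (2 - ζ) := by
    refine hζ.sq_dvd_of_sub_one_pow_dvd_intCast ?_
    rw [← eq_intCast (algebraMap ℤ (𝓞 K)), map_sub,
      RingOfIntegers.algebraMap_norm_eq_prod_galRestrict,
      RingOfIntegers.algebraMap_norm_eq_prod_galRestrict]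
    exact Finset.dvd_prod_sub_prod _ fun σ _ => hconj σ
  rw [hζ.norm_two_sub] at hdiff
  exact (Int.modEq_iff_dvd.2 hdiff).symm

theorem norm_phi_congr (p : ℕ+) (hp : Fact (p : ℕ).Prime) (hodd : Odd (p : ℕ))
    (K : Type*) [Field K] [Algebra ℚ K] [IsCyclotomicExtension {(p : ℕ)} ℚ K]
    (ζ : 𝓞 K) (hζ : IsPrimitiveRoot ζ (p : ℕ))
    (x : 𝓞 K) (hx : x - 1 ∈ Ideal.span {1 - ζ}) :
    (Algebra.norm ℤ ((x - 1) ^ (p : ℕ) + 2 - ζ)) ≡ 2 ^ (p : ℕ) - 1 [ZMOD ((p : ℤ) ^ 2)] :=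
  norm_phi_congr_general p hp K ζ hζ x hx
end

section
/- Let p be an odd prime, ζ a primitive p-th root of unity, and φ(z) = (z − 1)^p + 2 − ζ. For all integers n > m ≥ 1, the principal ideals of ℤ[ζ] generated by φ^n(1) and φ^m(1) are coprime. -/
/-!
Put `λ = 1 - ζ`. Since `φ z - 1 = (z - 1)^p + λ`, every iterate `φ^k(1)` is `≡ 1 (mod λ)`.
On the other hand `φ 0 = λ` and `λ` is a fixed point of `φ` (here `p` odd and `ζ^p = 1` enter),
while `x - y ∣ φ x - φ y` because `φ` is a polynomial; hence for `n > m`,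
`φ^n(1) = φ^(n-m)(φ^m(1)) ≡ φ^(n-m)(0) = λ (mod φ^m(1))`.
A common divisor of `φ^n(1)` and `φ^m(1)` therefore divides `λ`, hence `1`.
-/

open NumberField

section

variable {R : Type*} [CommRing R]

theorem isCoprime_of_dvd_sub_one_of_dvd_sub {a b l : R} (hl : l ∣ a - 1) (hb : b ∣ a - l) :
    IsCoprime a b := by
  obtain ⟨c, hc⟩ := hl
  obtain ⟨d, hd⟩ := hb
  exact ⟨1 - c, c * d, by linear_combination hc - c * hd⟩

theorem sub_dvd_iterate_sub_iterate {f : R → R} (hf : ∀ x y, x - y ∣ f x - f y) (k : ℕ)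
    (x y : R) : x - y ∣ f^[k] x - f^[k] y := by
  induction k with
  | zero => simp
  | succ k ih =>
    simp only [Function.iterate_succ_apply']
    exact ih.trans (hf _ _)

def phi (p : ℕ) (ζ z : R) : R := (z - 1) ^ p + 2 - ζ

variable {p : ℕ} {ζ : R}

theorem sub_dvd_phi_sub_phi (x y : R) : x - y ∣ phi p ζ x - phi p ζ y := by
  have h : phi p ζ x - phi p ζ y = (x - 1) ^ p - (y - 1) ^ p := by unfold phi; ring
  simpa [h] using sub_dvd_pow_sub_pow (x - 1) (y - 1) p

theorem phi_zero (hp : Odd p) : phi p ζ 0 = 1 - ζ := by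
  simp only [phi, zero_sub, hp.neg_one_pow]
  ring

theorem phi_one_sub (hp : Odd p) (hζ : ζ ^ p = 1) : phi p ζ (1 - ζ) = 1 - ζ := by
  simp only [phi, sub_sub_cancel_left, hp.neg_pow, hζ]
  ring

theorem iterate_phi_succ_zero (hp : Odd p) (hζ : ζ ^ p = 1) (k : ℕ) :
    (phi p ζ)^[k + 1] 0 = 1 - ζ := by
  have hfix : Function.IsFixedPt (phi p ζ) (1 - ζ) := phi_one_sub hp hζ
  rw [Function.iterate_succ_apply, phi_zero hp, (hfix.iterate k).eq]

theorem one_sub_dvd_iterate_phi_one_sub_one (hp : p ≠ 0) (k : ℕ) :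
    1 - ζ ∣ (phi p ζ)^[k] 1 - 1 := by
  refine Function.Iterate.rec (fun z => 1 - ζ ∣ z - 1) (by simp) (fun z hz => ?_) k
  have h : phi p ζ z - 1 = (z - 1) ^ p + (1 - ζ) := by unfold phi; ring
  rw [h]
  exact dvd_add (dvd_pow hz hp) dvd_rfl

end

theorem iterates_coprime_general (p : ℕ+) (hodd : Odd (p : ℕ))
    (K : Type*) [Field K]
    (ζ : 𝓞 K) (hζ : IsPrimitiveRoot ζ (p : ℕ))
    (φ : 𝓞 K → 𝓞 K) (hφ : ∀ z, φ z = (z - 1) ^ (p : ℕ) + 2 - ζ) :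
    ∀ n m : ℕ, 1 ≤ m → m < n →
      IsCoprime (Ideal.span {φ^[n] 1}) (Ideal.span {φ^[m] 1}) := by
  intro n m _ hmn
  obtain rfl : φ = phi (p : ℕ) ζ := funext hφ
  obtain ⟨k, rfl⟩ : ∃ k, n = (k + 1) + m := ⟨n - m - 1, by omega⟩
  rw [Ideal.isCoprime_span_singleton_iff]
  refine isCoprime_of_dvd_sub_one_of_dvd_sub (one_sub_dvd_iterate_phi_one_sub_one p.ne_zero _) ?_
  have h := sub_dvd_iterate_sub_iterate (f := phi (p : ℕ) ζ) sub_dvd_phi_sub_phi (k + 1)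
    ((phi (p : ℕ) ζ)^[m] 1) 0
  rwa [sub_zero, iterate_phi_succ_zero hodd hζ.pow_eq_one, ← Function.iterate_add_apply] at h

theorem iterates_coprime (p : ℕ+) (hp : Fact (p : ℕ).Prime) (hodd : Odd (p : ℕ))
    (K : Type*) [Field K] [Algebra ℚ K] [IsCyclotomicExtension {(p : ℕ)} ℚ K]
    (ζ : 𝓞 K) (hζ : IsPrimitiveRoot ζ (p : ℕ))
    (φ : 𝓞 K → 𝓞 K) (hφ : ∀ z, φ z = (z - 1) ^ (p : ℕ) + 2 - ζ) :
    ∀ n m : ℕ, 1 ≤ m → m < n →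
      IsCoprime (Ideal.span {φ^[n] 1}) (Ideal.span {φ^[m] 1}) :=
  iterates_coprime_general p hodd K ζ hζ φ hφ
end

section
/- Let p be an odd prime, ζ a primitive p-th root of unity, and φ(z) = (z − 1)^p + 2 − ζ ∈ ℤ[ζ][z]. For every n ≥ 1, the n-th iterate φ^n(z) is Eisenstein at the prime 𝔭 = (1 − ζ): its constant term φ^n(0) = 1 − ζ generates 𝔭 but is not in 𝔭², all non-leading coefficients lie in 𝔭, and the leading coefficient is 1. In particular, φ^n(z) is irreducible over ℚ(ζ). -/
open NumberField Polynomial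

/-!
Modulo `𝔭 = (1 - ζ)` we have `ζ ≡ 1` and `p ≡ 0`, so `φ ≡ (z - 1)^p + 1 ≡ z^p` and hence
`φ^n ≡ z^(p^n)`: every non-leading coefficient of the monic polynomial `φ^n` lies in `𝔭`.
Since `p` is odd, `φ(0) = 1 - ζ` and `φ(1 - ζ) = (-ζ)^p + 2 - ζ = 1 - ζ`, so the constant term
`φ^n(0)` is the prime element `1 - ζ`, which is not in `𝔭²`. Eisenstein's criterion gives
irreducibility over `𝓞 K`, and Gauss's lemma (`𝓞 K` is integrally closed) over `K`.
-/

namespace Polynomial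

variable {R S : Type*} [CommRing R] [CommRing S]

theorem map_iterate_comp (f : R →+* S) (φ q : R[X]) (n : ℕ) :
    (φ.comp^[n] q).map f = (φ.map f).comp^[n] (q.map f) := by
  induction n with
  | zero => rfl
  | succ n ih => rw [Function.iterate_succ_apply', Function.iterate_succ_apply', map_comp, ih]

theorem map_iterate_comp_X_of_map_eq_X_pow {f : R →+* S} {φ : R[X]} {d : ℕ}
    (hφ : φ.map f = X ^ d) (n : ℕ) : (φ.comp^[n] X).map f = X ^ d ^ n := by
  rw [map_iterate_comp, hφ, map_X]
  induction n with
  | zero => simp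
  | succ n ih => rw [Function.iterate_succ_apply', ih, X_pow_comp, ← pow_mul, pow_succ]

theorem Monic.iterate_comp [NoZeroDivisors R] {φ q : R[X]} (hφ : φ.Monic)
    (hφd : φ.natDegree ≠ 0) (hq : q.Monic) (hqd : q.natDegree ≠ 0) (n : ℕ) :
    (φ.comp^[n] q).Monic := by
  induction n with
  | zero => exact hq
  | succ n ih =>
    rw [Function.iterate_succ_apply']
    exact hφ.comp ih (by rw [natDegree_iterate_comp]; exact mul_ne_zero (pow_ne_zero _ hφd) hqd)

theorem coeff_zero_iterate_comp_X {φ : R[X]} {a : R} (h0 : φ.eval 0 = a) (ha : φ.eval a = a)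
    {n : ℕ} (hn : n ≠ 0) : (φ.comp^[n] X).coeff 0 = a := by
  obtain ⟨m, rfl⟩ := Nat.exists_eq_succ_of_ne_zero hn
  rw [coeff_zero_eq_eval_zero, iterate_comp_eval, eval_X, Function.iterate_succ_apply, h0,
    Function.iterate_fixed ha]

theorem Monic.isEisensteinAt_of_map_eq_X_pow {𝓟 : Ideal R} (h𝓟 : 𝓟 ≠ ⊤) {f : R[X]}
    (hf : f.Monic) {k : ℕ} (hmap : f.map (Ideal.Quotient.mk 𝓟) = X ^ k)
    (h0 : f.coeff 0 ∉ 𝓟 ^ 2) : f.IsEisensteinAt 𝓟 := by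
  have : Nontrivial (R ⧸ 𝓟) := Ideal.Quotient.nontrivial_iff.mpr h𝓟
  have hk : f.natDegree = k := by
    rw [← hf.natDegree_map (Ideal.Quotient.mk 𝓟), hmap, natDegree_X_pow]
  refine hf.isEisensteinAt_of_mem_of_notMem h𝓟 (fun {n} hn ↦ ?_) h0
  rw [← Ideal.Quotient.eq_zero_iff_mem, ← coeff_map, hmap, coeff_X_pow, if_neg (by omega)]

theorem monic_X_sub_one_pow_add_C {p : ℕ} (hp : p ≠ 0) (c : R) : ((X - 1) ^ p + C c).Monic := by
  nontriviality R
  refine ((monic_X_sub_C 1).pow p).add_of_left ?_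
  rw [degree_eq_natDegree ((monic_X_sub_C 1).pow p).ne_zero, (monic_X_sub_C 1).natDegree_pow,
    natDegree_X_sub_C, mul_one]
  exact degree_C_le.trans_lt (by exact_mod_cast Nat.pos_of_ne_zero hp)

theorem natDegree_X_sub_one_pow_add_C [Nontrivial R] (p : ℕ) (c : R) :
    ((X - 1) ^ p + C c).natDegree = p := by
  rw [natDegree_add_C, ← C_1, (monic_X_sub_C 1).natDegree_pow, natDegree_X_sub_C, mul_one]

theorem map_X_sub_one_pow_add_C {p : ℕ} [Fact p.Prime] [CharP S p] {f : R →+* S} {c : R}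
    (hc : f c = 1) : ((X - 1) ^ p + C c).map f = X ^ p := by
  rw [Polynomial.map_add, Polynomial.map_pow, Polynomial.map_sub, map_X, Polynomial.map_one, map_C,
    hc, C_1, sub_pow_char, one_pow, sub_add_cancel]

theorem eval_zero_X_sub_one_pow_add_C_two_sub {p : ℕ} (hp : Odd p) (ζ : R) :
    ((X - 1) ^ p + C (2 - ζ)).eval 0 = 1 - ζ := by
  rw [eval_add, eval_pow, eval_sub, eval_X, eval_one, eval_C, zero_sub, hp.neg_one_pow]
  ring

theorem eval_one_sub_X_sub_one_pow_add_C_two_sub {p : ℕ} (hp : Odd p) {ζ : R} (hζ : ζ ^ p = 1) :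
    ((X - 1) ^ p + C (2 - ζ)).eval (1 - ζ) = 1 - ζ := by
  rw [eval_add, eval_pow, eval_sub, eval_X, eval_one, eval_C, sub_sub_cancel_left, hp.neg_pow, hζ]
  ring

end Polynomial

theorem Prime.notMem_span_singleton_sq {R : Type*} [CommRing R] [IsDomain R] {π : R}
    (hπ : Prime π) : π ∉ Ideal.span {π} ^ 2 := by
  rw [Ideal.span_singleton_pow, Ideal.mem_span_singleton]
  nth_rw 2 [← pow_one π]
  rw [pow_dvd_pow_iff hπ.ne_zero hπ.not_isUnit]
  omega

theorem Ideal.Quotient.charP_of_natCast_mem {R : Type*} [CommRing R] {I : Ideal R} (hI : I ≠ ⊤)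
    {p : ℕ} [Fact p.Prime] (hp : (p : R) ∈ I) : CharP (R ⧸ I) p :=
  have : Nontrivial (R ⧸ I) := Ideal.Quotient.nontrivial_iff.mpr hI
  (CharP.charP_iff_prime_eq_zero Fact.out).mpr <| by
    rwa [← map_natCast (Ideal.Quotient.mk I), Ideal.Quotient.eq_zero_iff_mem]

namespace IsPrimitiveRoot

variable {p : ℕ} [Fact p.Prime] {K : Type*} [Field K] [CharZero K] [IsCyclotomicExtension {p} ℚ K]
  {ζ : 𝓞 K}

theorem prime_one_sub (hζ : IsPrimitiveRoot ζ p) : Prime (1 - ζ) := by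
  rw [← neg_sub]
  exact (hζ.map_of_injective RingOfIntegers.coe_injective).zeta_sub_one_prime'.neg

theorem one_sub_dvd_prime (hζ : IsPrimitiveRoot ζ p) : 1 - ζ ∣ (p : 𝓞 K) := by
  rw [← neg_sub, neg_dvd]
  exact (hζ.map_of_injective RingOfIntegers.coe_injective).toInteger_sub_one_dvd_prime'

end IsPrimitiveRoot

theorem iterate_eisenstein (p : ℕ+) (hp : Fact (p : ℕ).Prime) (hodd : Odd (p : ℕ))
    (K : Type*) [Field K] [Algebra ℚ K] [IsCyclotomicExtension {(p : ℕ)} ℚ K]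
    (ζ : 𝓞 K) (hζ : IsPrimitiveRoot ζ (p : ℕ))
    (φ : Polynomial (𝓞 K)) (hφ : φ = (X - 1) ^ (p : ℕ) + C (2 - ζ)) :
    ∀ n : ℕ, 1 ≤ n →
      ((fun q => φ.comp q)^[n] X).Monic ∧
      ((fun q => φ.comp q)^[n] X).coeff 0 = 1 - ζ ∧
      ((fun q => φ.comp q)^[n] X).IsEisensteinAt (Ideal.span {1 - ζ}) ∧
      Irreducible (((fun q => φ.comp q)^[n] X).map (algebraMap (𝓞 K) K)) := by
  intro n hn
  subst hφ
  have : CharZero K := charZero_of_injective_algebraMap (algebraMap ℚ K).injective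
  -- Mathlib's cyclotomic API uses the `ℚ`-algebra structure of a characteristic-zero field.
  have : @IsCyclotomicExtension {(p : ℕ)} ℚ K _ _ DivisionRing.toRatAlgebra := by
    rwa [Subsingleton.elim (DivisionRing.toRatAlgebra : Algebra ℚ K) ‹_›]
  have : NumberField K := IsCyclotomicExtension.numberField {(p : ℕ)} ℚ K
  have hπ : Prime (1 - ζ) := hζ.prime_one_sub
  have h𝔭 : (Ideal.span {1 - ζ}).IsPrime := (Ideal.span_singleton_prime hπ.ne_zero).mpr hπ
  have : CharP (𝓞 K ⧸ Ideal.span {1 - ζ}) p := Ideal.Quotient.charP_of_natCast_mem h𝔭.ne_top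
    (Ideal.mem_span_singleton.mpr hζ.one_sub_dvd_prime)
  have hmod : ((X - 1) ^ (p : ℕ) + C (2 - ζ)).map (Ideal.Quotient.mk (Ideal.span {1 - ζ})) =
      X ^ (p : ℕ) := by
    refine map_X_sub_one_pow_add_C ?_
    rw [← map_one (Ideal.Quotient.mk _), Ideal.Quotient.eq]
    convert Ideal.mem_span_singleton_self (1 - ζ) using 1
    ring
  have hmonic := (monic_X_sub_one_pow_add_C p.ne_zero (2 - ζ)).iterate_comp
    (by rw [natDegree_X_sub_one_pow_add_C]; exact p.ne_zero) monic_X (by simp) n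
  have hcoeff := coeff_zero_iterate_comp_X (eval_zero_X_sub_one_pow_add_C_two_sub hodd ζ)
    (eval_one_sub_X_sub_one_pow_add_C_two_sub hodd hζ.pow_eq_one) (by omega : n ≠ 0)
  have hEis := hmonic.isEisensteinAt_of_map_eq_X_pow h𝔭.ne_top
    (map_iterate_comp_X_of_map_eq_X_pow hmod n) (hcoeff ▸ hπ.notMem_span_singleton_sq)
  have hdeg : 0 < (((X - 1) ^ (p : ℕ) + C (2 - ζ)).comp^[n] X).natDegree := by
    rw [natDegree_iterate_comp, natDegree_X_sub_one_pow_add_C, natDegree_X, mul_one]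
    positivity
  exact ⟨hmonic, hcoeff, hEis, hmonic.irreducible_iff_irreducible_map_fraction_map.mp
    (hEis.irreducible h𝔭 hmonic.isPrimitive hdeg)⟩
end
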